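/- arXiv:1712.04755 — 7 statements merged into one kernel-verified Lean document; each statement's English description precedes it below -/
import Mathlib

section
/- Let t, a, b > 0. Then t/a − (t/a + b²/a²)·ln(1 + t·a/b²) ≤ −t²/(2(b² + a·t/3)). -/
/-!
With `u = t a / b²`, both sides are `-(b²/a²)` times, respectively, Bennett's function
`h(u) = (1 + u) log (1 + u) - u` and `u² / (2 (1 + u/3))`. Their difference
vanishes at `0` and has derivative `log (1 + u) - 3u(u + 6) / (2 (u + 3)²)`, which is nonnegative
since `log (1 + u) ≥ 2u / (u + 2)` and `4 (u + 3)² - 3 (u + 2)(u + 6) = u² ≥ 0`.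
-/

open Real

noncomputable def bennettFun (u : ℝ) : ℝ := (1 + u) * log (1 + u) - u

lemma hasDerivAt_bennettFun {u : ℝ} (hu : 1 + u ≠ 0) :
    HasDerivAt bennettFun (log (1 + u)) u := by
  have h : HasDerivAt (fun v : ℝ => 1 + v) 1 u := (hasDerivAt_id' u).const_add 1
  exact ((h.fun_mul (h.log hu)).sub (hasDerivAt_id' u)).congr_deriv (by field_simp; ring)

lemma hasDerivAt_sq_div_two_mul_one_add_div_three {u : ℝ} (hu : 1 + u / 3 ≠ 0) :
    HasDerivAt (fun v : ℝ => v ^ 2 / (2 * (1 + v / 3)))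
      (3 * u * (u + 6) / (2 * (u + 3) ^ 2)) u := by
  have h : HasDerivAt (fun v : ℝ => 2 * (1 + v / 3)) (2 / 3) u :=
    ((((hasDerivAt_id' u).div_const 3).const_add 1).const_mul 2).congr_deriv (by ring)
  exact ((hasDerivAt_pow 2 u).fun_div h (by simpa using hu)).congr_deriv
    (by field_simp; ring)

lemma sq_div_le_bennettFun {u : ℝ} (hu : 0 ≤ u) :
    u ^ 2 / (2 * (1 + u / 3)) ≤ bennettFun u := by
  set g : ℝ → ℝ := fun v => bennettFun v - v ^ 2 / (2 * (1 + v / 3))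
  have hg : ∀ x ∈ Set.Ici (0 : ℝ), HasDerivAt g
      (log (1 + x) - 3 * x * (x + 6) / (2 * (x + 3) ^ 2)) x := fun x (hx : 0 ≤ x) =>
    (hasDerivAt_bennettFun (by linarith)).sub
      (hasDerivAt_sq_div_two_mul_one_add_div_three (by linarith))
  have hmono : MonotoneOn g (Set.Ici 0) := by
    refine monotoneOn_of_hasDerivWithinAt_nonneg (convex_Ici 0)
      (fun x hx => (hg x hx).continuousAt.continuousWithinAt)
      (fun x hx => (hg x (interior_subset hx)).hasDerivWithinAt) fun x hx => ?_
    have hx : 0 ≤ x := interior_subset hx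
    have hderiv_bound : 3 * x * (x + 6) / (2 * (x + 3) ^ 2) ≤ 2 * x / (x + 2) := by
      rw [div_le_div_iff₀ (by positivity) (by positivity)]
      nlinarith [mul_nonneg hx (sq_nonneg x)]
    linarith [le_log_one_add_of_nonneg hx]
  simpa [g, bennettFun, sub_nonneg] using hmono Set.self_mem_Ici hu hu

theorem stmt_1 (t a b : ℝ) (ht : 0 < t) (ha : 0 < a) (hb : 0 < b) :
    t / a - (t / a + b ^ 2 / a ^ 2) * Real.log (1 + t * a / b ^ 2) ≤
      -(t ^ 2) / (2 * (b ^ 2 + a * t / 3)) := by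
  set u := t * a / b ^ 2
  have hlhs :
      t / a - (t / a + b ^ 2 / a ^ 2) * log (1 + u) = -(b ^ 2 / a ^ 2) * bennettFun u := by
    simp only [bennettFun, u]
    field_simp
    ring
  have hrhs :
      -(t ^ 2) / (2 * (b ^ 2 + a * t / 3)) = -(b ^ 2 / a ^ 2) * (u ^ 2 / (2 * (1 + u / 3))) := by
    simp only [u]
    field_simp
  rw [hlhs, hrhs]
  exact mul_le_mul_of_nonpos_left (sq_div_le_bennettFun (by positivity)) (neg_nonpos.mpr (by positivity))
end

section
/- Let γ, λ > 0 with γλ < 1/2. Then β_n = γ² ∑_{k=1}^n (1/k²) ∏_{i=k+1}^n (1 − γλ/i)² satisfies β_n ≤ (2(1−γλ)/(1−2γλ)) · 4^{γλ} γ² / n^{2γλ} for all n ≥ 1. -/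
/-!
Write `a = γλ`. By Bernoulli's inequality each factor satisfies `1 - a/i ≤ (i/(i+1))^a`, so the
product telescopes: `∏_{i=k+1}^n (1 - a/i)² ≤ ((k+1)/(n+1))^{2a} ≤ (2k/n)^{2a}`. This bounds `β_n` by
`4^a γ² n^{-2a} ∑_k k^{2a-2}`, and comparing the sum with `∫ t^{2a-2} dt` (via the tangent line of
the convex function `t ↦ t^{2a-1}`) gives `∑_{k=1}^n k^{2a-2} ≤ 1 + 1/(1-2a) = 2(1-a)/(1-2a)`.
-/

open Real Finset

theorem one_add_mul_self_le_rpow_one_add_of_nonpos {s p : ℝ} (hs : -1 < s) (hp1 : -1 ≤ p)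
    (hp : p ≤ 0) : 1 + p * s ≤ (1 + s) ^ p := by
  have hs0 : 0 < 1 + s := by linarith
  have hq : (1 + s) ^ (-p) ≤ 1 + -p * s :=
    rpow_one_add_le_one_add_mul_self hs.le (by linarith) (by linarith)
  have hq0 : 0 < (1 + s) ^ (-p) := rpow_pos_of_pos hs0 _
  calc 1 + p * s ≤ (1 + -p * s)⁻¹ := by
        rw [inv_eq_one_div, le_div_iff₀ (hq0.trans_le hq)]
        nlinarith [sq_nonneg (p * s)]
    _ ≤ ((1 + s) ^ (-p))⁻¹ := inv_anti₀ hq0 hq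
    _ = (1 + s) ^ p := by rw [rpow_neg hs0.le, inv_inv]

theorem one_sub_div_le_div_add_one_rpow {a x : ℝ} (ha0 : 0 ≤ a) (ha1 : a ≤ 1) (hx : 0 < x) :
    1 - a / x ≤ (x / (x + 1)) ^ a := by
  have hbase : x / (x + 1) = (1 + 1 / x)⁻¹ := by field_simp
  calc 1 - a / x = 1 + -a * (1 / x) := by ring
    _ ≤ (1 + 1 / x) ^ (-a) :=
        one_add_mul_self_le_rpow_one_add_of_nonpos (by linarith [one_div_pos.2 hx]) (by linarith)
          (by linarith)
    _ = (x / (x + 1)) ^ a := by rw [hbase, rpow_neg (by positivity), inv_rpow (by positivity)]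

theorem prod_Icc_one_sub_div_le {a : ℝ} (ha0 : 0 ≤ a) (ha1 : a ≤ 1) {k n : ℕ} (hkn : k ≤ n) :
    ∏ i ∈ Icc (k + 1) n, (1 - a / (i : ℝ)) ≤ (((k : ℝ) + 1) / ((n : ℝ) + 1)) ^ a := by
  induction n, hkn using Nat.le_induction with
  | base => rw [Icc_eq_empty (by omega), prod_empty, div_self (by positivity), one_rpow]
  | succ n hkn ih =>
    rw [prod_Icc_succ_top (by omega)]
    have hfactor : 1 - a / ((n : ℝ) + 1) ≤ (((n : ℝ) + 1) / ((n : ℝ) + 1 + 1)) ^ a :=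
      one_sub_div_le_div_add_one_rpow ha0 ha1 (by positivity)
    have hfactor0 : 0 ≤ 1 - a / ((n : ℝ) + 1) := by
      rw [sub_nonneg, div_le_one (by positivity)]
      linarith [(n.cast_nonneg : (0 : ℝ) ≤ n)]
    push_cast
    calc (∏ i ∈ Icc (k + 1) n, (1 - a / (i : ℝ))) * (1 - a / ((n : ℝ) + 1))
        ≤ (((k : ℝ) + 1) / ((n : ℝ) + 1)) ^ a * (((n : ℝ) + 1) / ((n : ℝ) + 1 + 1)) ^ a :=
          mul_le_mul ih hfactor hfactor0 (by positivity)
      _ = (((k : ℝ) + 1) / ((n : ℝ) + 1 + 1)) ^ a := by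
          rw [← mul_rpow (by positivity) (by positivity)]
          congr 1
          field_simp

theorem one_div_sq_mul_prod_Icc_one_sub_div_sq_le {a : ℝ} (ha0 : 0 ≤ a) (ha1 : a ≤ 1)
    {k n : ℕ} (hk : 1 ≤ k) (hkn : k ≤ n) :
    1 / (k : ℝ) ^ 2 * ∏ i ∈ Icc (k + 1) n, (1 - a / (i : ℝ)) ^ 2 ≤
      (4 : ℝ) ^ a / (n : ℝ) ^ (2 * a) * (k : ℝ) ^ (2 * a - 2) := by
  have hk0 : (0 : ℝ) < k := by exact_mod_cast hk
  have hkn' : (k : ℝ) ≤ n := by exact_mod_cast hkn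
  have hprod0 : 0 ≤ ∏ i ∈ Icc (k + 1) n, (1 - a / (i : ℝ)) := by
    refine prod_nonneg fun i hi => ?_
    have hi1 : (1 : ℝ) ≤ i := by exact_mod_cast (by grind : 1 ≤ i)
    rw [sub_nonneg, div_le_one (by linarith)]
    linarith
  have hratio : ((k : ℝ) + 1) / ((n : ℝ) + 1) ≤ 2 * k / n := by
    have hk1 : (1 : ℝ) ≤ k := by exact_mod_cast hk
    rw [div_le_div_iff₀ (by positivity) (by linarith)]
    nlinarith [mul_le_mul_of_nonneg_right hk1 n.cast_nonneg]
  have hprod : ∏ i ∈ Icc (k + 1) n, (1 - a / (i : ℝ)) ^ 2 ≤ (2 * (k : ℝ) / n) ^ (2 * a) := by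
    rw [prod_pow, mul_comm (2 : ℝ) a, rpow_mul (by positivity), rpow_two]
    gcongr
    exact (prod_Icc_one_sub_div_le ha0 ha1 hkn).trans (by gcongr)
  have hfour : (4 : ℝ) ^ a = 2 ^ (2 * a) := by
    rw [rpow_mul (by norm_num)]
    norm_num
  calc 1 / (k : ℝ) ^ 2 * ∏ i ∈ Icc (k + 1) n, (1 - a / (i : ℝ)) ^ 2
      ≤ 1 / (k : ℝ) ^ 2 * (2 * (k : ℝ) / n) ^ (2 * a) := by gcongr
    _ = (4 : ℝ) ^ a / (n : ℝ) ^ (2 * a) * (k : ℝ) ^ (2 * a - 2) := by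
        rw [div_rpow (by positivity) (by positivity), mul_rpow (by norm_num) hk0.le, hfour,
          rpow_sub hk0, rpow_two]
        ring

theorem rpow_sub_mul_rpow_sub_one_le_sub_one_rpow {x p : ℝ} (hx : 1 < x) (hp1 : -1 ≤ p)
    (hp : p ≤ 0) : x ^ p - p * x ^ (p - 1) ≤ (x - 1) ^ p := by
  have hx0 : 0 < x := by linarith
  have hbern : 1 + p * (-(1 / x)) ≤ (1 + -(1 / x)) ^ p :=
    one_add_mul_self_le_rpow_one_add_of_nonpos
      (by rw [neg_lt_neg_iff, div_lt_one hx0]; exact hx) hp1 hp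
  calc x ^ p - p * x ^ (p - 1) = x ^ p * (1 + p * (-(1 / x))) := by
        rw [rpow_sub_one hx0.ne']
        ring
    _ ≤ x ^ p * (1 + -(1 / x)) ^ p := by gcongr
    _ = (x - 1) ^ p := by
        rw [← mul_rpow hx0.le (by linarith [(div_lt_one hx0).2 hx])]
        congr 1
        field_simp
        ring

theorem sum_Icc_rpow_sub_one_le {p : ℝ} (hp1 : -1 ≤ p) (hp : p < 0) (n : ℕ) :
    ∑ k ∈ Icc 1 n, (k : ℝ) ^ (p - 1) ≤ 1 - 1 / p := by
  have hinv : 0 ≤ -(1 / p) := by rw [neg_nonneg, one_div_nonpos]; exact hp.le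
  rcases Nat.eq_zero_or_pos n with rfl | hn
  · simp only [Icc_eq_empty_of_lt zero_lt_one, sum_empty]
    linarith
  -- Telescoping the tangent-line inequality gives the sharper bound `1 + (n ^ p - 1) / p`.
  have htele : ∀ m : ℕ, 1 ≤ m → ∑ k ∈ Icc 1 m, (k : ℝ) ^ (p - 1) ≤ 1 + ((m : ℝ) ^ p - 1) / p := by
    intro m hm
    induction m, hm using Nat.le_induction with
    | base => simp
    | succ m hm ih =>
      rw [sum_Icc_succ_top (by omega)]
      have htangent := rpow_sub_mul_rpow_sub_one_le_sub_one_rpow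
        (x := (m : ℝ) + 1) (by norm_cast; omega) hp1 hp.le
      rw [add_sub_cancel_right] at htangent
      have hstep : ((m : ℝ) + 1) ^ (p - 1) ≤ (((m : ℝ) + 1) ^ p - (m : ℝ) ^ p) / p := by
        rw [le_div_iff_of_neg hp]
        linarith
      push_cast
      calc ∑ k ∈ Icc 1 m, (k : ℝ) ^ (p - 1) + ((m : ℝ) + 1) ^ (p - 1)
          ≤ 1 + ((m : ℝ) ^ p - 1) / p + (((m : ℝ) + 1) ^ p - (m : ℝ) ^ p) / p := by
            gcongr
        _ = 1 + (((m : ℝ) + 1) ^ p - 1) / p := by ring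
  calc ∑ k ∈ Icc 1 n, (k : ℝ) ^ (p - 1) ≤ 1 + ((n : ℝ) ^ p - 1) / p := htele n hn
    _ = 1 - 1 / p + (n : ℝ) ^ p * (1 / p) := by ring
    _ ≤ 1 - 1 / p := by
        nlinarith [rpow_nonneg (n.cast_nonneg : (0 : ℝ) ≤ n) p]

theorem stmt_3_general (γ lam : ℝ) (hγ : 0 < γ) (hlam : 0 < lam) (h1 : γ * lam < 1 / 2)
    (n : ℕ) :
    γ ^ 2 * ∑ k ∈ Finset.Icc 1 n,
        (1 / (k : ℝ) ^ 2) * ∏ i ∈ Finset.Icc (k + 1) n, (1 - γ * lam / (i : ℝ)) ^ 2 ≤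
      (2 * (1 - γ * lam) / (1 - 2 * γ * lam)) * (4 : ℝ) ^ (γ * lam) * γ ^ 2 /
        (n : ℝ) ^ (2 * γ * lam) := by
  rw [mul_assoc 2 γ lam]
  set a := γ * lam
  have ha0 : 0 ≤ a := (mul_pos hγ hlam).le
  have hsum : ∑ k ∈ Icc 1 n, (k : ℝ) ^ (2 * a - 2) ≤ 2 * (1 - a) / (1 - 2 * a) := by
    have h := sum_Icc_rpow_sub_one_le (p := 2 * a - 1) (by linarith) (by linarith) n
    have hc : 1 - 2 * a ≠ 0 := by linarith
    have hc' : 2 * a - 1 ≠ 0 := by linarith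
    rwa [sub_sub, one_add_one_eq_two,
      show 1 - 1 / (2 * a - 1) = 2 * (1 - a) / (1 - 2 * a) by field_simp; ring] at h
  calc γ ^ 2 * ∑ k ∈ Icc 1 n, 1 / (k : ℝ) ^ 2 * ∏ i ∈ Icc (k + 1) n, (1 - a / (i : ℝ)) ^ 2
      ≤ γ ^ 2 * ∑ k ∈ Icc 1 n, (4 : ℝ) ^ a / (n : ℝ) ^ (2 * a) * (k : ℝ) ^ (2 * a - 2) := by
        gcongr γ ^ 2 * ∑ k ∈ Icc 1 n, ?_ with k hk
        obtain ⟨hk1, hkn⟩ := mem_Icc.1 hk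
        exact one_div_sq_mul_prod_Icc_one_sub_div_sq_le ha0 (by linarith) hk1 hkn
    _ ≤ γ ^ 2 * ((4 : ℝ) ^ a / (n : ℝ) ^ (2 * a) * (2 * (1 - a) / (1 - 2 * a))) := by
        rw [← mul_sum]
        gcongr
    _ = 2 * (1 - a) / (1 - 2 * a) * (4 : ℝ) ^ a * γ ^ 2 / (n : ℝ) ^ (2 * a) := by ring

theorem stmt_3 (γ lam : ℝ) (hγ : 0 < γ) (hlam : 0 < lam) (h1 : γ * lam < 1 / 2)
    (n : ℕ) (hn : 1 ≤ n) :
    γ ^ 2 * ∑ k ∈ Finset.Icc 1 n,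
        (1 / (k : ℝ) ^ 2) * ∏ i ∈ Finset.Icc (k + 1) n, (1 - γ * lam / (i : ℝ)) ^ 2 ≤
      (2 * (1 - γ * lam) / (1 - 2 * γ * lam)) * (4 : ℝ) ^ (γ * lam) * γ ^ 2 /
        (n : ℝ) ^ (2 * γ * lam) :=
  stmt_3_general γ lam hγ hlam h1 n
end

section
/- Let γ, λ > 0 with γλ < 1, α ∈ [0,1], γ_k = γ/k^α, and for k ≤ n define a_k = γ_k ∏_{i=k+1}^n (1 − γ_i λ). Then sup_{1 ≤ k ≤ n} a_k = max{a_1, a_n}. In particular, for α = 1 the sequence (a_k) is non-increasing so the sup equals a_1 = (γ/(1−γλ))·∏_{i=1}^n(1−γλ/i), and for α = 0 it is increasing so the sup equals a_n = γ. -/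
/-!
Since `aₖ = ((k+1)^α - γλ) / k^α · aₖ₊₁`, the sequence decreases at step `k` exactly when
`γλ ≤ (k+1)^α - k^α`. By concavity of `x ↦ x^α` these increments are non-increasing in `k`, so
once the sequence starts increasing it keeps increasing: it falls and then rises, and its maximum
on `[1, n]` is attained at an endpoint. For `α = 1` the increments are `1 > γλ`, for `α = 0`
they are `0 < γλ`.
-/

open Finset

lemma le_max_endpoints_of_monotone_switch {β : Type*} [LinearOrder β] {f : ℕ → β} {m n : ℕ}
    (P : ℕ → Prop) (hP : Monotone P)
    (hdec : ∀ k, m ≤ k → k < n → ¬P k → f (k + 1) ≤ f k)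
    (hinc : ∀ k, m ≤ k → k < n → P k → f k ≤ f (k + 1)) {k : ℕ} (hmk : m ≤ k) (hkn : k ≤ n) :
    f k ≤ max (f m) (f n) := by
  by_cases h : ∃ j, m ≤ j ∧ j < k ∧ P j
  · obtain ⟨j, hmj, hjk, hPj⟩ := h
    refine le_max_of_le_right <| monotoneOn_of_le_succ (s := Set.Icc k n) Set.ordConnected_Icc
      ?_ ⟨le_rfl, hkn⟩ ⟨hkn, le_rfl⟩ hkn
    rintro i - ⟨hki, -⟩ ⟨-, hin⟩
    rw [Order.succ_eq_add_one] at hin ⊢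
    exact hinc i (by omega) (by omega) (hP (by omega) hPj)
  · push Not at h
    refine le_max_of_le_left <| antitoneOn_of_succ_le (s := Set.Icc m k) Set.ordConnected_Icc
      ?_ ⟨le_rfl, hmk⟩ ⟨hmk, le_rfl⟩ hmk
    rintro i - ⟨hmi, -⟩ ⟨-, hik⟩
    rw [Order.succ_eq_add_one] at hik ⊢
    exact hdec i hmi (by omega) (h i hmi (by omega))

lemma ConcaveOn.antitone_nat_succ_sub {f : ℝ → ℝ} (hf : ConcaveOn ℝ (Set.Ici 0) f) :
    Antitone fun k : ℕ => f (k + 1) - f k := by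
  refine antitone_nat_of_succ_le fun k => ?_
  have hk : (0 : ℝ) ≤ k := k.cast_nonneg
  have hmid := hf.2 (Set.mem_Ici.2 hk) (Set.mem_Ici.2 (by linarith : (0 : ℝ) ≤ k + 2))
    (by norm_num : (0 : ℝ) ≤ 1 / 2) (by norm_num : (0 : ℝ) ≤ 1 / 2) (by norm_num)
  simp only [smul_eq_mul] at hmid
  rw [show (1 / 2 : ℝ) * k + 1 / 2 * (k + 2) = k + 1 by ring] at hmid
  push_cast
  rw [show (k : ℝ) + 1 + 1 = k + 2 by ring]
  linarith

noncomputable def discountedStep (γ lam α : ℝ) (n k : ℕ) : ℝ :=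
  γ / (k : ℝ) ^ α * ∏ i ∈ Icc (k + 1) n, (1 - γ / (i : ℝ) ^ α * lam)

section discountedStep

variable {γ lam α : ℝ} {n k : ℕ}

lemma discountedStep_pos (hγ : 0 < γ) (hlam : 0 ≤ lam) (h1 : γ * lam < 1) (hα : 0 ≤ α)
    (hk : 1 ≤ k) : 0 < discountedStep γ lam α n k := by
  have hfactor : ∀ i ∈ Icc (k + 1) n, 0 < 1 - γ / (i : ℝ) ^ α * lam := fun i hi => by
    have hi : (1 : ℝ) ≤ i := by exact_mod_cast (Nat.le_add_left 1 k).trans (mem_Icc.1 hi).1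
    have : γ / (i : ℝ) ^ α * lam ≤ γ * lam :=
      mul_le_mul_of_nonneg_right (div_le_self hγ.le (Real.one_le_rpow hi hα)) hlam
    linarith
  exact mul_pos (div_pos hγ (Real.rpow_pos_of_pos (by exact_mod_cast hk) α)) (prod_pos hfactor)

lemma discountedStep_eq_mul_succ (hk : 1 ≤ k) (hkn : k < n) :
    discountedStep γ lam α n k =
      (((k : ℝ) + 1) ^ α - γ * lam) / (k : ℝ) ^ α * discountedStep γ lam α n (k + 1) := by
  have hkα : (0 : ℝ) < (k : ℝ) ^ α := Real.rpow_pos_of_pos (by exact_mod_cast hk) α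
  have hk1α : (0 : ℝ) < ((k : ℝ) + 1) ^ α := Real.rpow_pos_of_pos (by positivity) α
  rw [discountedStep, discountedStep, Icc_eq_cons_Ioc (by omega : k + 1 ≤ n), prod_cons,
    ← Icc_add_one_left_eq_Ioc]
  push_cast
  field_simp

lemma discountedStep_succ_le_iff (hγ : 0 < γ) (hlam : 0 ≤ lam) (h1 : γ * lam < 1) (hα : 0 ≤ α)
    (hk : 1 ≤ k) (hkn : k < n) :
    discountedStep γ lam α n (k + 1) ≤ discountedStep γ lam α n k ↔
      γ * lam ≤ ((k : ℝ) + 1) ^ α - (k : ℝ) ^ α := by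
  rw [discountedStep_eq_mul_succ hk hkn,
    le_mul_iff_one_le_left (discountedStep_pos hγ hlam h1 hα (by omega)),
    one_le_div (Real.rpow_pos_of_pos (by exact_mod_cast hk) α), le_sub_comm]

lemma discountedStep_le_succ_iff (hγ : 0 < γ) (hlam : 0 ≤ lam) (h1 : γ * lam < 1) (hα : 0 ≤ α)
    (hk : 1 ≤ k) (hkn : k < n) :
    discountedStep γ lam α n k ≤ discountedStep γ lam α n (k + 1) ↔
      ((k : ℝ) + 1) ^ α - (k : ℝ) ^ α ≤ γ * lam := by
  rw [discountedStep_eq_mul_succ hk hkn,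
    mul_le_iff_le_one_left (discountedStep_pos hγ hlam h1 hα (by omega)),
    div_le_one (Real.rpow_pos_of_pos (by exact_mod_cast hk) α), sub_le_comm]

lemma discountedStep_le_max (hγ : 0 < γ) (hlam : 0 ≤ lam) (h1 : γ * lam < 1)
    (hα0 : 0 ≤ α) (hα1 : α ≤ 1) (hk : 1 ≤ k) (hkn : k ≤ n) :
    discountedStep γ lam α n k ≤
      max (discountedStep γ lam α n 1) (discountedStep γ lam α n n) := by
  have hincr : Antitone fun j : ℕ => ((j : ℝ) + 1) ^ α - (j : ℝ) ^ α :=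
    (Real.concaveOn_rpow hα0 hα1).antitone_nat_succ_sub
  refine le_max_endpoints_of_monotone_switch
    (fun j => ((j : ℝ) + 1) ^ α - (j : ℝ) ^ α ≤ γ * lam)
    (fun i j hij hi => (hincr hij).trans hi) (fun j hj hjn hP => ?_)
    (fun j hj hjn hP => (discountedStep_le_succ_iff hγ hlam h1 hα0 hj hjn).2 hP) hk hkn
  exact (discountedStep_succ_le_iff hγ hlam h1 hα0 hj hjn).2 (not_le.1 hP).le

lemma discountedStep_le_first_of_alpha_one (hγ : 0 < γ) (hlam : 0 ≤ lam) (h1 : γ * lam < 1)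
    (hk : 1 ≤ k) (hkn : k ≤ n) :
    discountedStep γ lam 1 n k ≤ discountedStep γ lam 1 n 1 := by
  refine antitoneOn_of_succ_le (s := Set.Icc 1 n) Set.ordConnected_Icc ?_
    ⟨le_rfl, hk.trans hkn⟩ ⟨hk, hkn⟩ hk
  rintro i - ⟨hi, -⟩ ⟨-, hin⟩
  rw [Order.succ_eq_add_one] at hin ⊢
  rw [discountedStep_succ_le_iff hγ hlam h1 zero_le_one hi (by omega), Real.rpow_one,
    Real.rpow_one, add_sub_cancel_left]
  exact h1.le

lemma discountedStep_first_of_alpha_one (h1 : γ * lam < 1) (hn : 1 ≤ n) :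
    discountedStep γ lam 1 n 1 = γ / (1 - γ * lam) * ∏ i ∈ Icc 1 n, (1 - γ * lam / (i : ℝ)) := by
  have hne : 1 - γ * lam ≠ 0 := by linarith
  rw [discountedStep, Icc_eq_cons_Ioc hn, prod_cons, ← Icc_add_one_left_eq_Ioc]
  simp only [Nat.cast_one, Real.rpow_one, div_one, mul_div_assoc]
  field_simp

lemma discountedStep_le_last_of_alpha_zero (hγ : 0 < γ) (hlam : 0 < lam) (h1 : γ * lam < 1)
    (hk : 1 ≤ k) (hkn : k ≤ n) :
    discountedStep γ lam 0 n k ≤ discountedStep γ lam 0 n n := by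
  refine monotoneOn_of_le_succ (s := Set.Icc 1 n) Set.ordConnected_Icc ?_
    ⟨hk, hkn⟩ ⟨hk.trans hkn, le_rfl⟩ hkn
  rintro i - ⟨hi, -⟩ ⟨-, hin⟩
  rw [Order.succ_eq_add_one] at hin ⊢
  rw [discountedStep_le_succ_iff hγ hlam.le h1 le_rfl hi (by omega), Real.rpow_zero,
    Real.rpow_zero, sub_self]
  exact (mul_pos hγ hlam).le

lemma discountedStep_last_of_alpha_zero : discountedStep γ lam 0 n n = γ := by
  simp [discountedStep]

end discountedStep

theorem stmt_6 (γ lam α : ℝ) (hγ : 0 < γ) (hlam : 0 < lam) (h1 : γ * lam < 1)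
    (hα : α ∈ Set.Icc (0 : ℝ) 1) (n : ℕ) (hn : 1 ≤ n)
    (a : ℕ → ℝ)
    (ha : ∀ k, a k = γ / (k : ℝ) ^ α * ∏ i ∈ Finset.Icc (k + 1) n, (1 - γ / (i : ℝ) ^ α * lam)) :
    (∀ k, 1 ≤ k → k ≤ n → a k ≤ max (a 1) (a n)) ∧
      (α = 1 → (∀ k, 1 ≤ k → k ≤ n → a k ≤ a 1) ∧
        a 1 = γ / (1 - γ * lam) * ∏ i ∈ Finset.Icc 1 n, (1 - γ * lam / (i : ℝ))) ∧
      (α = 0 → (∀ k, 1 ≤ k → k ≤ n → a k ≤ a n) ∧ a n = γ) := by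
  obtain rfl : a = discountedStep γ lam α n := funext ha
  refine ⟨fun k hk hkn => discountedStep_le_max hγ hlam.le h1 hα.1 hα.2 hk hkn,
    fun hα1 => ?_, fun hα0 => ?_⟩
  · subst hα1
    exact ⟨fun k hk hkn => discountedStep_le_first_of_alpha_one hγ hlam.le h1 hk hkn,
      discountedStep_first_of_alpha_one h1 hn⟩
  · subst hα0
    exact ⟨fun k hk hkn => discountedStep_le_last_of_alpha_zero hγ hlam h1 hk hkn,
      discountedStep_last_of_alpha_zero⟩
end

section
/- Let λ > 0, γ_k > 0 decreasing, and set P(k,n) = ∏_{i=k+1}^n (1 − γ_i λ)² (assuming γ_i λ < 1 for all i). Then for any 1 ≤ m ≤ n: ∑_{k=1}^n γ_k² P(k,n) ≤ (∑_{k=1}^n γ_k²)·exp(−2λ ∑_{i=m+1}^n γ_i) + γ_m/λ. -/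
/-!
Write `P(k, n) = ∏_{i=k+1}^n (1 - γ_i λ)²` and split the sum at `m`. For `k ≤ m`,
`P(k, n) ≤ P(m, n) ≤ exp(-2λ ∑_{i=m+1}^n γ_i)` since the factors lie in `[0, 1]` and
`(1 - x)² ≤ exp(-2x)`. For `k > m`, `γ_k² ≤ (γ_m / λ) · λγ_k` by monotonicity, and
`∑_{k=m+1}^n λγ_k P(k, n) ≤ 1` telescopes: `λγ_k P(k, n) ≤ P(k, n) - P(k - 1, n)`.
-/

open Finset Real

lemma one_sub_sq_le_exp_neg_two_mul {x : ℝ} (hx : x ≤ 1) : (1 - x) ^ 2 ≤ exp (-2 * x) :=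
  calc (1 - x) ^ 2 ≤ exp (-x) ^ 2 := pow_le_pow_left₀ (by linarith) (one_sub_le_exp_neg x) 2
    _ = exp (-2 * x) := by rw [← exp_nat_mul]; ring_nf

section OneSubSq

variable {a : ℕ → ℝ}

lemma prod_Ioc_one_sub_sq_le_exp (ha0 : ∀ i, 0 ≤ a i) (ha1 : ∀ i, a i ≤ 1) {k m : ℕ}
    (hkm : k ≤ m) (n : ℕ) :
    ∏ i ∈ Ioc k n, (1 - a i) ^ 2 ≤ exp (-2 * ∑ i ∈ Ioc m n, a i) :=
  calc ∏ i ∈ Ioc k n, (1 - a i) ^ 2 ≤ ∏ i ∈ Ioc m n, (1 - a i) ^ 2 :=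
        prod_anti_set_of_le_one (fun _ => sq_nonneg _)
          (fun i => pow_le_one₀ (by linarith [ha1 i]) (by linarith [ha0 i]))
          (Ioc_subset_Ioc_left hkm)
    _ ≤ ∏ i ∈ Ioc m n, exp (-2 * a i) :=
        prod_le_prod (fun _ _ => sq_nonneg _) (fun i _ => one_sub_sq_le_exp_neg_two_mul (ha1 i))
    _ = exp (-2 * ∑ i ∈ Ioc m n, a i) := by rw [← exp_sum, mul_sum]

lemma sum_Ioc_mul_prod_one_sub_sq_le (ha0 : ∀ i, 0 ≤ a i) (ha1 : ∀ i, a i ≤ 1) {m n : ℕ}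
    (hmn : m ≤ n) :
    ∑ k ∈ Ioc m n, a k * ∏ i ∈ Ioc k n, (1 - a i) ^ 2 ≤ 1 - ∏ i ∈ Ioc m n, (1 - a i) ^ 2 := by
  induction n, hmn using Nat.le_induction with
  | base => simp
  | succ n hmn ih =>
    have hprod : ∀ k ≤ n, ∏ i ∈ Ioc k (n + 1), (1 - a i) ^ 2 =
        (∏ i ∈ Ioc k n, (1 - a i) ^ 2) * (1 - a (n + 1)) ^ 2 :=
      fun k hk => prod_Ioc_succ_top hk _
    rw [sum_Ioc_succ_top hmn, hprod m hmn,
      sum_congr rfl fun k hk => by rw [hprod k (mem_Ioc.1 hk).2, ← mul_assoc], ← sum_mul, Ioc_self,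
      prod_empty, mul_one]
    -- the new summand satisfies `a ≤ 1 - (1 - a)²` because `a (1 - a) ≥ 0`
    nlinarith [mul_le_mul_of_nonneg_right ih (sq_nonneg (1 - a (n + 1))),
      mul_nonneg (ha0 (n + 1)) (sub_nonneg.2 (ha1 (n + 1)))]

lemma sum_Ioc_mul_prod_one_sub_sq_le_mul_exp (ha0 : ∀ i, 0 ≤ a i) (ha1 : ∀ i, a i ≤ 1)
    {w : ℕ → ℝ} (hw : ∀ k, 0 ≤ w k) {m n : ℕ} (hmn : m ≤ n) :
    ∑ k ∈ Ioc 0 m, w k * ∏ i ∈ Ioc k n, (1 - a i) ^ 2 ≤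
      (∑ k ∈ Ioc 0 n, w k) * exp (-2 * ∑ i ∈ Ioc m n, a i) :=
  calc ∑ k ∈ Ioc 0 m, w k * ∏ i ∈ Ioc k n, (1 - a i) ^ 2
      ≤ ∑ k ∈ Ioc 0 m, w k * exp (-2 * ∑ i ∈ Ioc m n, a i) :=
        sum_le_sum fun k hk => mul_le_mul_of_nonneg_left
          (prod_Ioc_one_sub_sq_le_exp ha0 ha1 (mem_Ioc.1 hk).2 n) (hw k)
    _ ≤ ∑ k ∈ Ioc 0 n, w k * exp (-2 * ∑ i ∈ Ioc m n, a i) :=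
        sum_le_sum_of_subset_of_nonneg (Ioc_subset_Ioc_right hmn)
          fun k _ _ => mul_nonneg (hw k) (exp_pos _).le
    _ = (∑ k ∈ Ioc 0 n, w k) * exp (-2 * ∑ i ∈ Ioc m n, a i) := (sum_mul ..).symm

end OneSubSq

lemma sum_Ioc_sq_mul_prod_one_sub_mul_sq_le {lam : ℝ} (hlam : 0 < lam) {γ : ℕ → ℝ}
    (hγ : ∀ i, 0 ≤ γ i) (hanti : Antitone γ) (hsmall : ∀ i, γ i * lam ≤ 1) {m n : ℕ}
    (hmn : m ≤ n) :
    ∑ k ∈ Ioc m n, γ k ^ 2 * ∏ i ∈ Ioc k n, (1 - γ i * lam) ^ 2 ≤ γ m / lam := by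
  have ha0 : ∀ i, 0 ≤ γ i * lam := fun i => mul_nonneg (hγ i) hlam.le
  have htele : ∑ k ∈ Ioc m n, γ k * lam * ∏ i ∈ Ioc k n, (1 - γ i * lam) ^ 2 ≤ 1 :=
    (sum_Ioc_mul_prod_one_sub_sq_le ha0 hsmall hmn).trans
      (sub_le_self _ (prod_nonneg fun _ _ => sq_nonneg _))
  calc ∑ k ∈ Ioc m n, γ k ^ 2 * ∏ i ∈ Ioc k n, (1 - γ i * lam) ^ 2
      ≤ ∑ k ∈ Ioc m n, γ m / lam * (γ k * lam * ∏ i ∈ Ioc k n, (1 - γ i * lam) ^ 2) := by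
        refine sum_le_sum fun k hk => ?_
        have hP : 0 ≤ γ k * lam * ∏ i ∈ Ioc k n, (1 - γ i * lam) ^ 2 :=
          mul_nonneg (ha0 k) (prod_nonneg fun _ _ => sq_nonneg _)
        calc γ k ^ 2 * ∏ i ∈ Ioc k n, (1 - γ i * lam) ^ 2
            = γ k / lam * (γ k * lam * ∏ i ∈ Ioc k n, (1 - γ i * lam) ^ 2) := by
              rw [← mul_assoc, div_mul_eq_mul_div, ← mul_assoc (γ k), mul_div_cancel_right₀ _ hlam.ne', sq]
          _ ≤ _ := by gcongr; exact hanti (mem_Ioc.1 hk).1.le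
    _ = γ m / lam * ∑ k ∈ Ioc m n, γ k * lam * ∏ i ∈ Ioc k n, (1 - γ i * lam) ^ 2 :=
        (mul_sum ..).symm
    _ ≤ γ m / lam := mul_le_of_le_one_right (div_nonneg (hγ m) hlam.le) htele

theorem stmt_7_general (lam : ℝ) (hlam : 0 < lam) (γ : ℕ → ℝ)
    (hpos : ∀ i, 0 < γ i) (hdec : ∀ i j, i ≤ j → γ j ≤ γ i)
    (hsmall : ∀ i, γ i * lam < 1) (n m : ℕ) (hmn : m ≤ n) :
    ∑ k ∈ Finset.Icc 1 n, γ k ^ 2 * ∏ i ∈ Finset.Icc (k + 1) n, (1 - γ i * lam) ^ 2 ≤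
      (∑ k ∈ Finset.Icc 1 n, γ k ^ 2) *
          Real.exp (-2 * lam * ∑ i ∈ Finset.Icc (m + 1) n, γ i) +
        γ m / lam := by
  have hγ : ∀ i, 0 ≤ γ i := fun i => (hpos i).le
  have ha0 : ∀ i, 0 ≤ γ i * lam := fun i => mul_nonneg (hγ i) hlam.le
  have ha1 : ∀ i, γ i * lam ≤ 1 := fun i => (hsmall i).le
  have hexp : -2 * lam * ∑ i ∈ Ioc m n, γ i = -2 * ∑ i ∈ Ioc m n, γ i * lam := by
    rw [← sum_mul]; ring
  simp only [Icc_add_one_left_eq_Ioc]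
  rw [show Icc 1 n = Ioc 0 n from Icc_add_one_left_eq_Ioc 0 n,
    ← sum_Ioc_consecutive _ (Nat.zero_le m) hmn, hexp]
  exact add_le_add
    (sum_Ioc_mul_prod_one_sub_sq_le_mul_exp ha0 ha1 (fun k => sq_nonneg (γ k)) hmn)
    (sum_Ioc_sq_mul_prod_one_sub_mul_sq_le hlam hγ hdec ha1 hmn)

theorem stmt_7 (lam : ℝ) (hlam : 0 < lam) (γ : ℕ → ℝ)
    (hpos : ∀ i, 0 < γ i) (hdec : ∀ i j, i ≤ j → γ j ≤ γ i)
    (hsmall : ∀ i, γ i * lam < 1) (n m : ℕ) (hm1 : 1 ≤ m) (hmn : m ≤ n) :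
    ∑ k ∈ Finset.Icc 1 n, γ k ^ 2 * ∏ i ∈ Finset.Icc (k + 1) n, (1 - γ i * lam) ^ 2 ≤
      (∑ k ∈ Finset.Icc 1 n, γ k ^ 2) *
          Real.exp (-2 * lam * ∑ i ∈ Finset.Icc (m + 1) n, γ i) +
        γ m / lam :=
  stmt_7_general lam hlam γ hpos hdec hsmall n m hmn
end

section
/- With Σ, g, A(λ) as above and g_λ = (Σ + λI)^{−1}Σ g, one has ‖g_λ − g‖ ≤ sqrt(√λ·‖g‖² + A(√λ)) for every λ > 0. -/
/-!
In the eigenbasis `u` the equation `(Σ + λ) g_λ = Σ g` gives the coordinates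
`⟪g_λ - g, u j⟫ = -t_j ⟪g, u j⟫` with `t_j = λ / (σ_j + λ)`. Since `0 < t_j ≤ 1` we have
`t_j² ≤ t_j`, and when `σ_j > √λ` moreover `t_j ≤ λ / √λ = √λ`. Hence each squared coordinate
is at most `⟪g, u j⟫²` on the low part of the spectrum and `√λ ⟪g, u j⟫²` on the high part,
and Parseval's identity sums these bounds to `A(√λ) + √λ ‖g‖²`.
-/

open Real
open scoped InnerProductSpace

namespace HilbertBasis

variable {ι H : Type*} [NormedAddCommGroup H] [InnerProductSpace ℝ H]

theorem hasSum_inner_sq (b : HilbertBasis ι ℝ H) (x : H) :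
    HasSum (fun i => ⟪x, b i⟫_ℝ ^ 2) (‖x‖ ^ 2) := by
  simpa only [real_inner_comm (b _) x, ← sq, real_inner_self_eq_norm_sq] using
    b.hasSum_inner_mul_inner x x

theorem norm_sq_le_tsum_of_inner_sq_le (b : HilbertBasis ι ℝ H) {x : H} {c : ι → ℝ}
    (hc : Summable c) (h : ∀ i, ⟪x, b i⟫_ℝ ^ 2 ≤ c i) : ‖x‖ ^ 2 ≤ ∑' i, c i :=
  hasSum_le h (b.hasSum_inner_sq x) hc.hasSum

end HilbertBasis

section Regularization

variable {H : Type*} [NormedAddCommGroup H] [InnerProductSpace ℝ H]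

theorem LinearMap.IsSymmetric.inner_apply_eq_mul_inner_of_apply_eq_smul {S : H →ₗ[ℝ] H}
    (hS : S.IsSymmetric) {v : H} {s : ℝ} (hv : S v = s • v) (x : H) :
    ⟪S x, v⟫_ℝ = s * ⟪x, v⟫_ℝ := by
  rw [hS x v, hv, real_inner_smul_right]

theorem LinearMap.IsSymmetric.inner_sub_eq_of_apply_add_smul_eq {S : H →ₗ[ℝ] H}
    (hS : S.IsSymmetric) {v : H} {s : ℝ}
    (hv : S v = s • v) {lam : ℝ} (hs : s + lam ≠ 0) {g y : H} (hy : S y + lam • y = S g) :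
    ⟪y - g, v⟫_ℝ = -(lam / (s + lam)) * ⟪g, v⟫_ℝ := by
  have hcoord : (s + lam) * ⟪y, v⟫_ℝ = s * ⟪g, v⟫_ℝ := by
    have := congrArg (fun z => ⟪z, v⟫_ℝ) hy
    simp only [inner_add_left, real_inner_smul_left,
      hS.inner_apply_eq_mul_inner_of_apply_eq_smul hv] at this
    linarith
  rw [inner_sub_left]
  field_simp
  linarith

end Regularization

theorem sq_div_add_le_ite_sqrt {s lam : ℝ} (hs : 0 ≤ s) (hlam : 0 < lam) :
    (lam / (s + lam)) ^ 2 ≤ if s ≤ √lam then 1 else √lam := by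
  set t := lam / (s + lam)
  have ht0 : 0 ≤ t := by positivity
  have ht1 : t ≤ 1 := div_le_one_of_le₀ (by linarith) (by positivity)
  have hsq : t ^ 2 ≤ t := by nlinarith
  split_ifs with hsmall
  · linarith
  · have : t ≤ lam / √lam :=
      div_le_div_of_nonneg_left hlam.le (sqrt_pos.mpr hlam) (by linarith [not_le.mp hsmall])
    rw [div_sqrt] at this
    linarith

theorem stmt_13_general {H : Type*} [NormedAddCommGroup H] [InnerProductSpace ℝ H] [CompleteSpace H]
    (u : HilbertBasis ℕ ℝ H) (σ : ℕ → ℝ) (hσpos : ∀ j, 0 ≤ σ j)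
    (Sop : H →L[ℝ] H) (hSsa : IsSelfAdjoint Sop) (heig : ∀ j, Sop (u j) = σ j • u j)
    (lam : ℝ) (hlam : 0 < lam) (g glam : H)
    (hglam : Sop glam + lam • glam = Sop g) :
    ‖glam - g‖ ≤ Real.sqrt (Real.sqrt lam * ‖g‖ ^ 2 +
      ∑' j, if σ j ≤ Real.sqrt lam then (inner ℝ g (u j) : ℝ) ^ 2 else 0) := by
  have hg := u.hasSum_inner_sq g
  have hlow : Summable fun j => if σ j ≤ √lam then ⟪g, u j⟫_ℝ ^ 2 else 0 :=
    hg.summable.of_nonneg_of_le (fun j => by split_ifs <;> positivity)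
      (fun j => by split_ifs <;> first | rfl | positivity)
  have hcoord (j : ℕ) : ⟪glam - g, u j⟫_ℝ ^ 2 ≤
      (if σ j ≤ √lam then ⟪g, u j⟫_ℝ ^ 2 else 0) + √lam * ⟪g, u j⟫_ℝ ^ 2 := by
    rw [hSsa.isSymmetric.inner_sub_eq_of_apply_add_smul_eq (heig j) (by linarith [hσpos j]) hglam,
      mul_pow, neg_sq]
    have := sq_div_add_le_ite_sqrt (hσpos j) hlam
    split_ifs at this ⊢ <;> nlinarith [sq_nonneg ⟪g, u j⟫_ℝ, sqrt_nonneg lam]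
  have hnorm := u.norm_sq_le_tsum_of_inner_sq_le (hlow.add (hg.summable.mul_left _)) hcoord
  rw [hlow.tsum_add (hg.summable.mul_left _), tsum_mul_left, hg.tsum_eq] at hnorm
  exact le_sqrt_of_sq_le (by linarith)

/-- Bound on the approximation error `‖g_λ − g‖` where `g_λ = (Σ + λI)⁻¹ Σ g`,
in terms of `√λ‖g‖²` and the spectral tail `A(√λ)`. -/
theorem stmt_13 {H : Type*} [NormedAddCommGroup H] [InnerProductSpace ℝ H] [CompleteSpace H]
    (u : HilbertBasis ℕ ℝ H) (σ : ℕ → ℝ) (hσpos : ∀ j, 0 ≤ σ j) (hσsum : Summable σ)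
    (Sop : H →L[ℝ] H) (hSsa : IsSelfAdjoint Sop) (heig : ∀ j, Sop (u j) = σ j • u j)
    (lam : ℝ) (hlam : 0 < lam) (g glam : H)
    (hglam : Sop glam + lam • glam = Sop g) :
    ‖glam - g‖ ≤ Real.sqrt (Real.sqrt lam * ‖g‖ ^ 2 +
      ∑' j, if σ j ≤ Real.sqrt lam then (inner ℝ g (u j) : ℝ) ^ 2 else 0) :=
  stmt_13_general u σ hσpos Sop hSsa heig lam hlam g glam hglam
end

section
/- Let λ > 0 and Σ a positive self-adjoint operator with eigenvalues σ_j ≤ C/j^β for some β > 1 and C > 0. Then tr(Σ(Σ + λI)^{−2}) ≤ c_β · λ^{−1−1/β} for a constant c_β depending only on β and C; in particular, when σ_j ≤ 1/j^β, tr(Σ(Σ+λI)^{−2}) ≤ (β/(β−1))·λ^{−(1+1/β)}. -/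
/-!
Termwise, `σ / (σ + λ)² ≤ min σ λ / λ²`. Let `t` be the crossover point where `C t^{-β} = λ`;
then `min (σ_j, λ) ≤ C · max (j + 1, t)^{-β}`, and this majorant is antitone, so the integral
test bounds its sum by `C ∫₀^∞ max (x, t)^{-β} dx = C t^{1-β} β/(β-1) = λ t β/(β-1)`.
Dividing by `λ²` and substituting `t = (C/λ)^{1/β}` gives `C^{1/β} β/(β-1) λ^{-(1+1/β)}`.
-/

open MeasureTheory Set

lemma div_add_sq_le_min_div_sq {s l : ℝ} (hs : 0 ≤ s) (hl : 0 < l) :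
    s / (s + l) ^ 2 ≤ min s l / l ^ 2 := by
  rw [div_le_div_iff₀ (by positivity) (by positivity)]
  rcases min_cases s l with ⟨h, _⟩ | ⟨h, hls⟩ <;> rw [h]
  · nlinarith [mul_nonneg hs hl.le, mul_nonneg (mul_nonneg hs hs) hs]
  · nlinarith [mul_nonneg hs hl.le, mul_nonneg (mul_nonneg hs hl.le) hl.le]

lemma antitone_max_rpow_neg {β t : ℝ} (hβ : 0 ≤ β) (ht : 0 < t) :
    Antitone fun x : ℝ => max x t ^ (-β) := fun _ _ hxy =>
  Real.rpow_le_rpow_of_nonpos (ht.trans_le (le_max_right _ _)) (max_le_max_right t hxy)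
    (neg_nonpos.mpr hβ)

lemma max_rpow_eqOn_Ioc {β t : ℝ} :
    EqOn (fun x : ℝ => max x t ^ (-β)) (fun _ => t ^ (-β)) (Ioc 0 t) :=
  fun _ hx => by simp only [max_eq_right hx.2]

lemma max_rpow_eqOn_Ioi {β t : ℝ} :
    EqOn (fun x : ℝ => max x t ^ (-β)) (fun x => x ^ (-β)) (Ioi t) :=
  fun _ hx => by simp only [max_eq_left (mem_Ioi.mp hx).le]

lemma integrableOn_max_rpow_neg {β t : ℝ} (hβ : 1 < β) (ht : 0 < t) :
    IntegrableOn (fun x : ℝ => max x t ^ (-β)) (Ioi 0) := by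
  rw [← Ioc_union_Ioi_eq_Ioi ht.le]
  refine IntegrableOn.union ?_ ?_
  · exact (integrableOn_congr_fun max_rpow_eqOn_Ioc measurableSet_Ioc).mpr
      (integrableOn_const (by simp))
  · exact (integrableOn_congr_fun max_rpow_eqOn_Ioi measurableSet_Ioi).mpr
      (integrableOn_Ioi_rpow_of_lt (by linarith) ht)

lemma integral_max_rpow_neg {β t : ℝ} (hβ : 1 < β) (ht : 0 < t) :
    ∫ x in Ioi 0, max x t ^ (-β) = β / (β - 1) * t ^ (1 - β) := by
  have hint := integrableOn_max_rpow_neg hβ ht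
  rw [← Ioc_union_Ioi_eq_Ioi ht.le] at hint ⊢
  rw [setIntegral_union Ioc_disjoint_Ioi_same measurableSet_Ioi
      (hint.mono_set subset_union_left) (hint.mono_set subset_union_right),
    setIntegral_congr_fun measurableSet_Ioc max_rpow_eqOn_Ioc,
    setIntegral_congr_fun measurableSet_Ioi max_rpow_eqOn_Ioi,
    setIntegral_const, integral_Ioi_rpow_of_lt (by linarith) ht]
  have hβ1 : β - 1 ≠ 0 := by linarith
  have hβ1' : -β + 1 ≠ 0 := by linarith
  simp only [Real.volume_real_Ioc_of_le ht.le, sub_zero, smul_eq_mul]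
  rw [show 1 - β = -β + 1 by ring, Real.rpow_add ht, Real.rpow_one]
  field_simp
  ring

lemma summable_max_rpow_neg {β t : ℝ} (hβ : 1 < β) (ht : 0 < t) :
    Summable fun j : ℕ => max ((j : ℝ) + 1) t ^ (-β) := by
  have hanti := (antitone_max_rpow_neg (by linarith : 0 ≤ β) ht).antitoneOn (Ici 0)
  exact_mod_cast (summable_nat_add_iff 1).mpr <| hanti.summable_of_integrableOn_Ioi_zero
    (integrableOn_max_rpow_neg hβ ht) fun x _ => by positivity

lemma tsum_max_rpow_neg_le {β t : ℝ} (hβ : 1 < β) (ht : 0 < t) :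
    ∑' j : ℕ, max ((j : ℝ) + 1) t ^ (-β) ≤ β / (β - 1) * t ^ (1 - β) := by
  have hanti := (antitone_max_rpow_neg (by linarith : 0 ≤ β) ht).antitoneOn (Ici 0)
  rw [← integral_max_rpow_neg hβ ht]
  simpa only [Nat.cast_add, Nat.cast_one] using
    hanti.tsum_add_one_le_integral (integrableOn_max_rpow_neg hβ ht) fun x _ => by positivity

lemma min_le_mul_max_rpow_neg {β C l s t x : ℝ} (hCt : C * t ^ (-β) = l) (hx : 0 < x)
    (hs : s ≤ C / x ^ β) :
    min s l ≤ C * max x t ^ (-β) := by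
  rcases le_total x t with hxt | htx
  · rw [max_eq_right hxt, hCt]
    exact min_le_right s l
  · rw [max_eq_left htx, Real.rpow_neg hx.le, ← div_eq_mul_inv]
    exact (min_le_left s l).trans hs

theorem tsum_div_add_sq_le {β C l : ℝ} (σ : ℕ → ℝ) (hβ : 1 < β) (hC : 0 < C) (hl : 0 < l)
    (hσ0 : ∀ j, 0 ≤ σ j) (hσ : ∀ j : ℕ, σ j ≤ C / ((j : ℝ) + 1) ^ β) :
    ∑' j, σ j / (σ j + l) ^ 2 ≤ C ^ (1 / β) * (β / (β - 1)) * l ^ (-(1 + 1 / β)) := by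
  set t := (C / l) ^ (1 / β) with ht_def
  have ht : 0 < t := by positivity
  have hCt : C * t ^ (-β) = l := by
    rw [← Real.rpow_mul (by positivity), one_div_mul_eq_div, neg_div, div_self (by positivity),
      Real.rpow_neg_one, inv_div]
    field_simp
  have hterm : ∀ j : ℕ, σ j / (σ j + l) ^ 2 ≤ C / l ^ 2 * max ((j : ℝ) + 1) t ^ (-β) := by
    intro j
    rw [div_mul_eq_mul_div]
    exact (div_add_sq_le_min_div_sq (hσ0 j) hl).trans <| by
      gcongr
      exact min_le_mul_max_rpow_neg hCt (by positivity) (hσ j)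
  have hmaj := (summable_max_rpow_neg hβ ht).mul_left (C / l ^ 2)
  calc ∑' j, σ j / (σ j + l) ^ 2
      ≤ ∑' j : ℕ, C / l ^ 2 * max ((j : ℝ) + 1) t ^ (-β) :=
        (hmaj.of_nonneg_of_le (fun j => by have := hσ0 j; positivity) hterm).tsum_le_tsum hterm hmaj
    _ = C / l ^ 2 * ∑' j : ℕ, max ((j : ℝ) + 1) t ^ (-β) := tsum_mul_left
    _ ≤ C / l ^ 2 * (β / (β - 1) * t ^ (1 - β)) := by gcongr; exact tsum_max_rpow_neg_le hβ ht
    _ = β / (β - 1) * t / l := by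
        rw [show 1 - β = 1 + -β by ring, Real.rpow_add ht, Real.rpow_one, ← hCt]
        field_simp
    _ = C ^ (1 / β) * (β / (β - 1)) * l ^ (-(1 + 1 / β)) := by
        rw [ht_def, Real.div_rpow hC.le hl.le, Real.rpow_neg hl.le, Real.rpow_add hl, Real.rpow_one]
        field_simp

/-- If the eigenvalues decay as `σ_j ≤ C/j^β` with `β > 1`, then
`tr(Σ(Σ+λI)⁻²) = ∑_j σ_j/(σ_j+λ)² ≤ c_β λ^{-(1+1/β)}` with `c_β` depending only on
`β` and `C`; in particular when `σ_j ≤ 1/j^β` one can take `c_β = β/(β−1)`. -/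
theorem stmt_14 (β C : ℝ) (hβ : 1 < β) (hC : 0 < C) :
    (∃ c : ℝ, 0 < c ∧ ∀ lam : ℝ, 0 < lam → ∀ σ : ℕ → ℝ, (∀ j, 0 ≤ σ j) →
        (∀ j : ℕ, σ j ≤ C / ((j : ℝ) + 1) ^ β) →
        ∑' j, σ j / (σ j + lam) ^ 2 ≤ c * lam ^ (-(1 + 1 / β))) ∧
      (∀ lam : ℝ, 0 < lam → ∀ σ : ℕ → ℝ, (∀ j, 0 ≤ σ j) →
        (∀ j : ℕ, σ j ≤ 1 / ((j : ℝ) + 1) ^ β) →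
        ∑' j, σ j / (σ j + lam) ^ 2 ≤ β / (β - 1) * lam ^ (-(1 + 1 / β))) := by
  refine ⟨⟨C ^ (1 / β) * (β / (β - 1)), by positivity,
    fun lam hlam σ hσ0 hσ => tsum_div_add_sq_le σ hβ hC hlam hσ0 hσ⟩, ?_⟩
  intro lam hlam σ hσ0 hσ
  simpa only [Real.one_rpow, one_mul] using tsum_div_add_sq_le σ hβ one_pos hlam hσ0 hσ
end

section
/- Let H be a Hilbert space, Σ a bounded positive self-adjoint operator with ‖Σ‖_op ≤ R², λ > 0, and let x ↦ K_x be a measurable map into H with ‖K_x‖ ≤ R and E[K_x ⊗ K_x] = Σ. Then E[(K_x⊗K_x + λI)·Σ(Σ+λI)^{−1}·(K_x⊗K_x + λI)] ⪯ (R² + 2λ)·Σ in the Loewner order. -/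
/-!
Write `A_x = K_x ⊗ K_x`. Since `(Σ + λ) S = Σ` with `Σ ≥ 0` and `λ > 0`, the operator `S` is
symmetric and satisfies `‖S u‖² ≤ ⟪u, S u⟫`, so it is a positive contraction. Expanding,
`⟪v, (A_x + λ) S (A_x + λ) v⟫ = ⟪K_x, v⟫² ⟪K_x, S K_x⟫ + 2λ ⟪K_x, v⟫ ⟪K_x, S v⟫ + λ² ⟪v, S v⟫`,
and `⟪K_x, S K_x⟫ ≤ ‖K_x‖² ≤ R²`. Taking expectations the bound becomes
`R² ⟪v, Σ v⟫ + 2λ ⟪v, Σ S v⟫ + λ² ⟪v, S v⟫ = (R² + 2λ) ⟪v, Σ v⟫ - λ² ⟪v, S v⟫`.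
-/

open MeasureTheory ContinuousLinearMap

local notation "⟪" x ", " y "⟫" => inner ℝ x y

section

variable {H : Type*} [NormedAddCommGroup H] [InnerProductSpace ℝ H]

theorem inner_smulRight_innerSL_self_apply (k v w : H) :
    ⟪v, (innerSL ℝ k).smulRight k w⟫ = ⟪k, v⟫ * ⟪k, w⟫ := by
  rw [smulRight_apply, innerSL_apply_apply, real_inner_smul_right, real_inner_comm v k, mul_comm]

namespace ContinuousLinearMap.IsPositive

variable {T : H →L[ℝ] H}

theorem inner_apply_sq_le (hT : T.IsPositive) (u w : H) :
    ⟪u, T w⟫ ^ 2 ≤ ⟪u, T u⟫ * ⟪w, T w⟫ := by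
  have hquad : ∀ t : ℝ, 0 ≤ ⟪w, T w⟫ * (t * t) + 2 * ⟪u, T w⟫ * t + ⟪u, T u⟫ := by
    intro t
    have hsymm : ⟪w, T u⟫ = ⟪u, T w⟫ := by
      rw [← hT.inner_left_eq_inner_right, real_inner_comm]
    have := hT.inner_nonneg_right (u + t • w)
    simp only [map_add, map_smul, inner_add_left, inner_add_right, real_inner_smul_left,
      real_inner_smul_right, hsymm] at this
    linarith
  have := discrim_le_zero hquad
  rw [discrim] at this
  linarith

theorem apply_eq_zero_of_inner_apply_self_eq_zero (hT : T.IsPositive) {u : H}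
    (hu : ⟪u, T u⟫ = 0) : T u = 0 := by
  have := hT.inner_apply_sq_le (T u) u
  rw [real_inner_comm, hu, mul_zero, real_inner_self_eq_norm_sq] at this
  simpa using this

end ContinuousLinearMap.IsPositive

section Resolvent

variable {T S : H →L[ℝ] H} {lam : ℝ}

theorem apply_apply_add_smul_of_comp_eq (hS : (T + lam • ContinuousLinearMap.id ℝ H).comp S = T)
    (u : H) : T (S u) + lam • S u = T u := by
  simpa using congr($hS u)

theorem norm_sq_le_inner_apply_of_comp_eq (hT : T.IsPositive) (hlam : 0 < lam)
    (hS : (T + lam • ContinuousLinearMap.id ℝ H).comp S = T) (u : H) :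
    ‖S u‖ ^ 2 ≤ ⟪u, S u⟫ := by
  have hSu : lam • S u = T (u - S u) := by
    rw [map_sub, ← apply_apply_add_smul_of_comp_eq hS u, add_sub_cancel_left]
  have := hT.inner_nonneg_right (u - S u)
  rw [← hSu, real_inner_smul_right, inner_sub_left, real_inner_self_eq_norm_sq] at this
  nlinarith

theorem isPositive_of_comp_eq (hT : T.IsPositive) (hlam : 0 < lam)
    (hS : (T + lam • ContinuousLinearMap.id ℝ H).comp S = T) : S.IsPositive := by
  have happ := apply_apply_add_smul_of_comp_eq hS
  refine (isPositive_iff S).2 ⟨fun u w => ?_, fun u => ?_⟩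
  · show ⟪S u, w⟫ = ⟪u, S w⟫
    have hcross : ⟪T u, S w⟫ = ⟪S u, T w⟫ := by
      rw [← happ u, ← happ w, inner_add_left, inner_add_right, real_inner_smul_left,
        real_inner_smul_right, hT.inner_left_eq_inner_right]
    have h1 : lam * ⟪S u, w⟫ = ⟪T u, w⟫ - ⟪S u, T w⟫ := by
      rw [← real_inner_smul_left, ← hT.inner_left_eq_inner_right, ← inner_sub_left, ← happ u,
        add_sub_cancel_left]
    have h2 : lam * ⟪u, S w⟫ = ⟪u, T w⟫ - ⟪T u, S w⟫ := by
      rw [← real_inner_smul_right, hT.inner_left_eq_inner_right u (S w), ← inner_sub_right,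
        ← happ w, add_sub_cancel_left]
    exact mul_left_cancel₀ hlam.ne' (by rw [h1, h2, hcross, hT.inner_left_eq_inner_right])
  · rw [real_inner_comm]
    exact (sq_nonneg _).trans (norm_sq_le_inner_apply_of_comp_eq hT hlam hS u)

theorem inner_apply_self_le_norm_sq_of_comp_eq (hT : T.IsPositive) (hlam : 0 < lam)
    (hS : (T + lam • ContinuousLinearMap.id ℝ H).comp S = T) (u : H) :
    ⟪u, S u⟫ ≤ ‖u‖ ^ 2 := by
  have h := norm_sq_le_inner_apply_of_comp_eq hT hlam hS u
  have hcs := real_inner_le_norm u (S u)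
  nlinarith [norm_nonneg u, norm_nonneg (S u)]

theorem inner_apply_apply_of_comp_eq (hS : (T + lam • ContinuousLinearMap.id ℝ H).comp S = T)
    (u : H) : ⟪u, T (S u)⟫ = ⟪u, T u⟫ - lam * ⟪u, S u⟫ := by
  rw [← apply_apply_add_smul_of_comp_eq hS u, inner_add_right, real_inner_smul_right,
    add_sub_cancel_right]

end Resolvent

section SecondMoment

variable {X : Type*} [MeasurableSpace X] {μ : Measure X} {K : X → H} {Sig : H →L[ℝ] H}

theorem isPositive_of_integral_inner_mul_inner
    (hSig : ∀ u w : H, ∫ x, ⟪K x, u⟫ * ⟪K x, w⟫ ∂μ = ⟪u, Sig w⟫) : Sig.IsPositive := by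
  refine (isPositive_iff Sig).2 ⟨fun u w => ?_, fun u => ?_⟩
  · show ⟪Sig u, w⟫ = ⟪u, Sig w⟫
    simp only [real_inner_comm, ← hSig, mul_comm]
  · rw [real_inner_comm, ← hSig]
    exact integral_nonneg fun x => mul_self_nonneg _

variable (hSig : ∀ u w : H, ∫ x, ⟪K x, u⟫ * ⟪K x, w⟫ ∂μ = ⟪u, Sig w⟫)
include hSig

/- `K` is not assumed measurable. Integrability comes from `hSig` alone: a non-integrable
square has integral `0`, which forces the vector into `ker Sig`. -/
theorem integrable_inner_mul_self_of_apply_ne_zero {u : H} (hu : Sig u ≠ 0) :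
    Integrable (fun x => ⟪K x, u⟫ * ⟪K x, u⟫) μ := by
  by_contra h
  have hSig_pos := isPositive_of_integral_inner_mul_inner hSig
  exact hu (hSig_pos.apply_eq_zero_of_inner_apply_self_eq_zero (by rw [← hSig, integral_undef h]))

theorem integrable_inner_mul_self (hSig0 : Sig ≠ 0) (u : H) :
    Integrable (fun x => ⟪K x, u⟫ * ⟪K x, u⟫) μ := by
  by_cases hu : Sig u = 0
  · obtain ⟨w, hw⟩ : ∃ w, Sig w ≠ 0 := by
      by_contra! h
      exact hSig0 (ext h)
    have hadd := integrable_inner_mul_self_of_apply_ne_zero hSig (u := u + w) (by simpa [hu])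
    have hsub := integrable_inner_mul_self_of_apply_ne_zero hSig (u := u - w) (by simpa [hu])
    have hw' := integrable_inner_mul_self_of_apply_ne_zero hSig hw
    convert ((hadd.add hsub).sub (hw'.const_mul 2)).const_mul (2⁻¹ : ℝ) using 2 with x
    simp only [Pi.add_apply, Pi.sub_apply, inner_add_right, inner_sub_right]
    ring
  · exact integrable_inner_mul_self_of_apply_ne_zero hSig hu

theorem integrable_inner_mul_inner (hSig0 : Sig ≠ 0) (u w : H) :
    Integrable (fun x => ⟪K x, u⟫ * ⟪K x, w⟫) μ := by
  convert ((integrable_inner_mul_self hSig hSig0 (u + w)).sub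
    (integrable_inner_mul_self hSig hSig0 (u - w))).const_mul (4⁻¹ : ℝ) using 2 with x
  simp only [Pi.sub_apply, inner_add_right, inner_sub_right]
  ring

theorem integral_mul_inner_mul_inner_add_const [IsProbabilityMeasure μ] (hSig0 : Sig ≠ 0)
    (a b c : ℝ) (v w : H) :
    ∫ x, a * (⟪K x, v⟫ * ⟪K x, v⟫) + b * (⟪K x, v⟫ * ⟪K x, w⟫) + c ∂μ =
      a * ⟪v, Sig v⟫ + b * ⟪v, Sig w⟫ + c := by
  have hvv := (integrable_inner_mul_inner hSig hSig0 v v).const_mul a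
  have hvw := (integrable_inner_mul_inner hSig hSig0 v w).const_mul b
  rw [integral_add ?_ (integrable_const c), integral_add hvv hvw, integral_const_mul,
    integral_const_mul, hSig, hSig, integral_const, probReal_univ, one_smul]
  exact hvv.add hvw

end SecondMoment

theorem inner_smulRight_add_smul_id_comp_apply {S : H →L[ℝ] H} (hS : S.IsPositive)
    (lam : ℝ) (k v : H) :
    ⟪v, (((innerSL ℝ k).smulRight k + lam • ContinuousLinearMap.id ℝ H).comp
      (S.comp ((innerSL ℝ k).smulRight k + lam • ContinuousLinearMap.id ℝ H))) v⟫ =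
      ⟪k, v⟫ ^ 2 * ⟪k, S k⟫ + 2 * lam * (⟪k, v⟫ * ⟪k, S v⟫) + lam ^ 2 * ⟪v, S v⟫ := by
  have hSsymm : ⟪v, S k⟫ = ⟪k, S v⟫ := by
    rw [← hS.inner_left_eq_inner_right, real_inner_comm]
  simp only [comp_apply, add_apply, smul_apply, smulRight_apply, innerSL_apply_apply, id_apply,
    map_add, map_smul, inner_add_right, real_inner_smul_right, hSsymm, real_inner_comm v k]
  ring

end

theorem stmt_15_general {X : Type*} [MeasurableSpace X] (μ : Measure X) [IsProbabilityMeasure μ]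
    {H : Type*} [NormedAddCommGroup H] [InnerProductSpace ℝ H]
    (K : X → H) (R lam : ℝ) (hlam : 0 < lam)
    (hK : ∀ x, ‖K x‖ ≤ R)
    (Sig : H →L[ℝ] H)
    (hSig : ∀ v w : H, ∫ x, (inner ℝ v (((innerSL ℝ (K x)).smulRight (K x)) w) : ℝ) ∂μ =
      (inner ℝ v (Sig w) : ℝ))
    (S : H →L[ℝ] H)
    (hS₂ : (Sig + lam • ContinuousLinearMap.id ℝ H).comp S = Sig)
    (hint : ∀ v : H, Integrable (fun x =>
      (inner ℝ v ((((innerSL ℝ (K x)).smulRight (K x) + lam • ContinuousLinearMap.id ℝ H).comp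
        (S.comp ((innerSL ℝ (K x)).smulRight (K x) + lam • ContinuousLinearMap.id ℝ H))) v) : ℝ)) μ) :
    ∀ v : H, ∫ x,
        (inner ℝ v ((((innerSL ℝ (K x)).smulRight (K x) + lam • ContinuousLinearMap.id ℝ H).comp
          (S.comp ((innerSL ℝ (K x)).smulRight (K x) + lam • ContinuousLinearMap.id ℝ H))) v) : ℝ) ∂μ ≤
      (R ^ 2 + 2 * lam) * (inner ℝ v (Sig v) : ℝ) := by
  intro v
  have hmom : ∀ u w : H, ∫ x, ⟪K x, u⟫ * ⟪K x, w⟫ ∂μ = ⟪u, Sig w⟫ := fun u w => by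
    simpa only [inner_smulRight_innerSL_self_apply] using hSig u w
  have hSigpos := isPositive_of_integral_inner_mul_inner hmom
  have hSpos := isPositive_of_comp_eq hSigpos hlam hS₂
  rcases eq_or_ne Sig 0 with rfl | hSig0
  · obtain rfl : S = 0 := by simpa [hlam.ne'] using hS₂
    simp
  have hbound : ∀ x, ⟪K x, S (K x)⟫ ≤ R ^ 2 := fun x =>
    (inner_apply_self_le_norm_sq_of_comp_eq hSigpos hlam hS₂ (K x)).trans
      (pow_le_pow_left₀ (norm_nonneg _) (hK x) 2)
  calc _ ≤ ∫ x, R ^ 2 * (⟪K x, v⟫ * ⟪K x, v⟫) + 2 * lam * (⟪K x, v⟫ * ⟪K x, S v⟫)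
          + lam ^ 2 * ⟪v, S v⟫ ∂μ := by
        refine integral_mono (hint v)
          ((((integrable_inner_mul_inner hmom hSig0 v v).const_mul _).add
            ((integrable_inner_mul_inner hmom hSig0 v (S v)).const_mul _)).add
            (integrable_const _)) fun x => ?_
        rw [inner_smulRight_add_smul_id_comp_apply hSpos]
        nlinarith [hbound x, sq_nonneg ⟪K x, v⟫]
    _ = (R ^ 2 + 2 * lam) * ⟪v, Sig v⟫ - lam ^ 2 * ⟪v, S v⟫ := by
        rw [integral_mul_inner_mul_inner_add_const hmom hSig0, inner_apply_apply_of_comp_eq hS₂]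
        ring
    _ ≤ _ := sub_le_self _ (mul_nonneg (sq_nonneg _) (hSpos.inner_nonneg_right v))

/-- Operator inequality `E[(K_x⊗K_x + λI) Σ(Σ+λI)⁻¹ (K_x⊗K_x + λI)] ⪯ (R² + 2λ)Σ`
in the Loewner (quadratic-form) order; `S = Σ(Σ+λI)⁻¹` is encoded by
`S ∘ (Σ + λI) = Σ = (Σ + λI) ∘ S`. -/
theorem stmt_15 {X : Type*} [MeasurableSpace X] (μ : Measure X) [IsProbabilityMeasure μ]
    {H : Type*} [NormedAddCommGroup H] [InnerProductSpace ℝ H] [CompleteSpace H]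
    (K : X → H) (R lam : ℝ) (hR : 0 < R) (hlam : 0 < lam)
    (hK : ∀ x, ‖K x‖ ≤ R)
    (Sig : H →L[ℝ] H) (hSigsa : IsSelfAdjoint Sig)
    (hSig : ∀ v w : H, ∫ x, (inner ℝ v (((innerSL ℝ (K x)).smulRight (K x)) w) : ℝ) ∂μ =
      (inner ℝ v (Sig w) : ℝ))
    (S : H →L[ℝ] H)
    (hS₁ : S.comp (Sig + lam • ContinuousLinearMap.id ℝ H) = Sig)
    (hS₂ : (Sig + lam • ContinuousLinearMap.id ℝ H).comp S = Sig)
    (hint : ∀ v : H, Integrable (fun x =>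
      (inner ℝ v ((((innerSL ℝ (K x)).smulRight (K x) + lam • ContinuousLinearMap.id ℝ H).comp
        (S.comp ((innerSL ℝ (K x)).smulRight (K x) + lam • ContinuousLinearMap.id ℝ H))) v) : ℝ)) μ) :
    ∀ v : H, ∫ x,
        (inner ℝ v ((((innerSL ℝ (K x)).smulRight (K x) + lam • ContinuousLinearMap.id ℝ H).comp
          (S.comp ((innerSL ℝ (K x)).smulRight (K x) + lam • ContinuousLinearMap.id ℝ H))) v) : ℝ) ∂μ ≤
      (R ^ 2 + 2 * lam) * (inner ℝ v (Sig v) : ℝ) :=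
  stmt_15_general μ K R lam hlam hK Sig hSig S hS₂ hint
end
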